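/- The matrix Q_⊗ = Q_1 ⊗ M_2 ⊗ ... ⊗ M_m − P_1 ⊗ Σ_{i=2}^m (M_2 ⊗ ... ⊗ F_i ⊗ ... ⊗ M_m) is positive semidefinite, given Q_1 ⪰ 0, P_1 ≻ 0, M_i ≻ 0, and F_i := A_i^T M_i + M_i A_i ⪯ 0 for i = 2,...,m. -/

import Mathlib

set_option maxHeartbeats 1000000


open Matrix
open scoped Kronecker

/-- Kronecker product of a family of matrices, realized over Pi index types. -/
noncomputable def kronFam {m : ℕ} {p q : Fin m → Type*} [∀ i, Fintype (p i)]
    (X : ∀ i, Matrix (p i) (q i) ℝ) : Matrix (∀ i, p i) (∀ i, q i) ℝ :=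
  Matrix.of fun a b => ∏ i, X i (a i) (b i)

lemma kronFam_mul {m : ℕ} {p : Fin m → Type*} [∀ i, Fintype (p i)]
    (B C : ∀ i, Matrix (p i) (p i) ℝ) :
    kronFam (fun i => B i * C i) = kronFam B * kronFam C := by
  ext a b
  simp only [kronFam, Matrix.mul_apply, Matrix.of_apply]
  rw [Finset.prod_univ_sum]
  simp [Finset.prod_mul_distrib, Fintype.piFinset_univ]

lemma kronFam_conjTranspose {m : ℕ} {p : Fin m → Type*} [∀ i, Fintype (p i)]
    (B : ∀ i, Matrix (p i) (p i) ℝ) :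
    (kronFam B)ᴴ = kronFam (fun i => (B i)ᴴ) := by
  ext a b
  simp [kronFam, Matrix.conjTranspose_apply]

open scoped MatrixOrder in
lemma Matrix.posSemidef_iff_eq_transpose_mul_self {n : Type*} [Fintype n] [DecidableEq n]
    {A : Matrix n n ℝ} : A.PosSemidef ↔ ∃ B : Matrix n n ℝ, A = Bᴴ * B := by
  constructor
  · intro hA
    have h0 : 0 ≤ A := hA.nonneg
    refine ⟨CFC.sqrt A, ?_⟩
    rw [← Matrix.star_eq_conjTranspose, (CFC.sqrt_nonneg A).isSelfAdjoint.star_eq,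
      CFC.sqrt_mul_sqrt_self A h0]
  · rintro ⟨B, rfl⟩
    exact Matrix.posSemidef_conjTranspose_mul_self _

lemma kronFam_posSemidef {m : ℕ} {p : Fin m → Type*} [∀ i, Fintype (p i)]
    [∀ i, DecidableEq (p i)]
    (X : ∀ i, Matrix (p i) (p i) ℝ) (hX : ∀ i, (X i).PosSemidef) :
    (kronFam X).PosSemidef := by
  choose B hB using fun i => Matrix.posSemidef_iff_eq_transpose_mul_self.mp (hX i)
  have : kronFam X = (kronFam B)ᴴ * kronFam B := by
    rw [kronFam_conjTranspose, ← kronFam_mul]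
    exact congrArg kronFam (funext hB)
  rw [this]
  exact Matrix.posSemidef_conjTranspose_mul_self _

lemma kron_posSemidef {n₁ : Type*} [Fintype n₁] [DecidableEq n₁]
    {n₂ : Type*} [Fintype n₂] [DecidableEq n₂]
    (P : Matrix n₁ n₁ ℝ) (S : Matrix n₂ n₂ ℝ) (hP : P.PosSemidef) (hS : S.PosSemidef) :
    (P ⊗ₖ S).PosSemidef := by
  obtain ⟨B, rfl⟩ := Matrix.posSemidef_iff_eq_transpose_mul_self.mp hP
  obtain ⟨C, rfl⟩ := Matrix.posSemidef_iff_eq_transpose_mul_self.mp hS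
  rw [Matrix.mul_kronecker_mul]
  have : Bᴴ ⊗ₖ Cᴴ = (B ⊗ₖ C)ᴴ := by
    ext ⟨a, a'⟩ ⟨b, b'⟩
    simp [Matrix.kroneckerMap_apply, Matrix.conjTranspose_apply, mul_comm]
  rw [this]
  exact Matrix.posSemidef_conjTranspose_mul_self _

lemma kronFam_update_neg {m : ℕ} {p : Fin m → Type*} [∀ i, Fintype (p i)]
    [∀ i, DecidableEq (p i)]
    (M : ∀ i, Matrix (p i) (p i) ℝ) (i : Fin m) (F : Matrix (p i) (p i) ℝ) :
    -(kronFam (Function.update M i F)) = kronFam (Function.update M i (-F)) := by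
  ext a b
  simp only [kronFam, Matrix.neg_apply, Matrix.of_apply]
  rw [← Finset.mul_prod_erase _ _ (Finset.mem_univ i),
      ← Finset.mul_prod_erase _ _ (Finset.mem_univ i)]
  simp only [Function.update_self]
  rw [Matrix.neg_apply, neg_mul]
  refine congrArg (fun x => -(F (a i) (b i) * x)) ?_
  refine Finset.prod_congr rfl fun j hj => ?_
  rw [Function.update_of_ne (Finset.ne_of_mem_erase hj),
      Function.update_of_ne (Finset.ne_of_mem_erase hj)]

/-- Layer 1 is explicit; layers 2,…,m are the families `A, M` over `Fin m`. -/
theorem stmt17 {n₁ : Type*} [Fintype n₁] [DecidableEq n₁]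
    {m : ℕ} {n : Fin m → Type*} [∀ i, Fintype (n i)] [∀ i, DecidableEq (n i)]
    (Q₁ P₁ : Matrix n₁ n₁ ℝ) (A M : ∀ i, Matrix (n i) (n i) ℝ)
    (hQ₁ : Q₁.PosSemidef) (hP₁ : P₁.PosDef) (hM : ∀ i, (M i).PosDef)
    (hF : ∀ i, (-((A i)ᵀ * M i + M i * A i)).PosSemidef) :
    (Q₁ ⊗ₖ kronFam M
      - P₁ ⊗ₖ (∑ i, kronFam (Function.update M i ((A i)ᵀ * M i + M i * A i)))).PosSemidef := by
  rw [sub_eq_add_neg]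
  apply Matrix.PosSemidef.add
  · exact kron_posSemidef _ _ hQ₁ (kronFam_posSemidef M fun i => (hM i).posSemidef)
  · have : -(P₁ ⊗ₖ (∑ i, kronFam (Function.update M i ((A i)ᵀ * M i + M i * A i))))
        = P₁ ⊗ₖ (∑ i, kronFam (Function.update M i (-((A i)ᵀ * M i + M i * A i)))) := by
      have hneg : ∀ S : Matrix (∀ i, n i) (∀ i, n i) ℝ, P₁ ⊗ₖ (-S) = -(P₁ ⊗ₖ S) := by
        intro S; ext ⟨a, b⟩ ⟨c, d⟩; simp [mul_neg]
      rw [← hneg]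
      refine congrArg (fun S => P₁ ⊗ₖ S) ?_
      rw [← Finset.sum_neg_distrib]
      exact Finset.sum_congr rfl fun i _ => kronFam_update_neg M i _
    rw [this]
    refine kron_posSemidef _ _ hP₁.posSemidef ?_
    apply Finset.sum_induction _ _ (fun a b ha hb => ha.add hb) Matrix.PosSemidef.zero
    intro i _
    apply kronFam_posSemidef
    intro j
    rcases eq_or_ne j i with rfl | hj
    · rw [Function.update_self]; exact hF j
    · rw [Function.update_of_ne hj]; exact (hM j).posSemidef
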